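/- The two explicit real 7×7 matrices X_l and X_r given by X_l = [[1,1,0,0,0,0,0],[1,2,0,1,0,0,0],[0,0,1,0,1,0,0],[0,1,0,2,0,1,0],[0,0,1,0,3,1,1],[0,0,0,1,1,2,0],[0,0,0,0,1,0,1]] and X_r = [[1,1,0,0,0,0,0],[1,3,0,1,0,1,0],[0,0,2,0,1,0,1],[0,1,0,1,0,0,0],[0,0,1,0,2,1,0],[0,1,0,0,1,2,0],[0,0,1,0,0,0,1]] have the same characteristic polynomial; in particular they have the same eigenvalues with multiplicity. -/

import Mathlib

/-!
The two matrices are not merely isospectral but permutation-similar: relabelling the seven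
triangles by `triangleRelabel` turns `X_l` into `X_r`, i.e. the underlying weighted graphs are
isomorphic, and conjugation by a permutation matrix preserves the characteristic polynomial.
-/

open Matrix

def auxMatrixLeft : Matrix (Fin 7) (Fin 7) ℝ :=
  !![1,1,0,0,0,0,0;
     1,2,0,1,0,0,0;
     0,0,1,0,1,0,0;
     0,1,0,2,0,1,0;
     0,0,1,0,3,1,1;
     0,0,0,1,1,2,0;
     0,0,0,0,1,0,1]

def auxMatrixRight : Matrix (Fin 7) (Fin 7) ℝ :=
  !![1,1,0,0,0,0,0;
     1,3,0,1,0,1,0;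
     0,0,2,0,1,0,1;
     0,1,0,1,0,0,0;
     0,0,1,0,2,1,0;
     0,1,0,0,1,2,0;
     0,0,1,0,0,0,1]

def triangleRelabel : Fin 7 ≃ Fin 7 where
  toFun := ![6, 2, 0, 4, 1, 5, 3]
  invFun := ![2, 4, 1, 6, 3, 5, 0]
  left_inv := by decide
  right_inv := by decide

theorem auxMatrixRight_eq_reindex :
    auxMatrixRight = reindex triangleRelabel triangleRelabel auxMatrixLeft := by
  -- In `!![…]` form both sides agree entrywise after reducing only `Fin 7` indices,
  -- so `rfl` never has to compare real numbers (an entrywise `ext` times out in the kernel).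
  rw [← etaExpand_eq (reindex _ _ _)]
  rfl

/-- The auxiliary matrices `X_l` and `X_r` of the two equispectral discretized
volumes of seven triangles have the same characteristic polynomial; in
particular they have the same eigenvalues with multiplicity. -/
theorem stmt_13 :
    (!![1,1,0,0,0,0,0;
        1,2,0,1,0,0,0;
        0,0,1,0,1,0,0;
        0,1,0,2,0,1,0;
        0,0,1,0,3,1,1;
        0,0,0,1,1,2,0;
        0,0,0,0,1,0,1] : Matrix (Fin 7) (Fin 7) ℝ).charpoly =
    (!![1,1,0,0,0,0,0;
        1,3,0,1,0,1,0;
        0,0,2,0,1,0,1;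
        0,1,0,1,0,0,0;
        0,0,1,0,2,1,0;
        0,1,0,0,1,2,0;
        0,0,1,0,0,0,1] : Matrix (Fin 7) (Fin 7) ℝ).charpoly := by
  change auxMatrixLeft.charpoly = auxMatrixRight.charpoly
  rw [auxMatrixRight_eq_reindex, charpoly_reindex]
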